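/- For every formula φ in the left-flat fragment of TeamLTL(⩔,A¹) there exists an equivalent HyperQPTL formula Ψ in the ∃_p* ∀_π fragment (a block of existential uniform propositional quantifiers followed by a single universal trace quantifier) of size linear in the size of φ: for every team (T,i), (T,i) ⊨ φ if and only if ∅,i holds of Ψ on T (i.e., Ψ is satisfied by T at the designated evaluation point i). -/
import Mathlib


set_option maxHeartbeats 1000000

universe u

/-- A trace over the set `α` of atomic propositions: an infinite sequence of
sets of propositions. -/
abbrev Trace (α : Type u) := ℕ → Set α

/-- LTL formulae in negation normal form. -/
inductive LTLForm (α : Type u) : Type u where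
  | pos : α → LTLForm α
  | neg : α → LTLForm α
  | lor : LTLForm α → LTLForm α → LTLForm α
  | land : LTLForm α → LTLForm α → LTLForm α
  | next : LTLForm α → LTLForm α
  | luntil : LTLForm α → LTLForm α → LTLForm α
  | wuntil : LTLForm α → LTLForm α → LTLForm α

namespace LTLForm
variable {α : Type u}

/-- Standard single-trace LTL semantics. -/
def sat (t : Trace α) : ℕ → LTLForm α → Prop
  | i, pos p => p ∈ t i
  | i, neg p => p ∉ t i
  | i, lor φ ψ => sat t i φ ∨ sat t i ψ
  | i, land φ ψ => sat t i φ ∧ sat t i ψ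
  | i, next φ => sat t (i+1) φ
  | i, luntil φ ψ => ∃ k, i ≤ k ∧ sat t k ψ ∧ ∀ m, i ≤ m → m < k → sat t m φ
  | i, wuntil φ ψ => ∀ k, i ≤ k → sat t k φ ∨ ∃ m, i ≤ m ∧ m ≤ k ∧ sat t m ψ

/-- Size of an LTL formula. -/
def size : LTLForm α → ℕ
  | pos _ => 1
  | neg _ => 1
  | lor φ ψ => φ.size + ψ.size + 1
  | land φ ψ => φ.size + ψ.size + 1
  | next φ => φ.size + 1
  | luntil φ ψ => φ.size + ψ.size + 1
  | wuntil φ ψ => φ.size + ψ.size + 1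

end LTLForm

/-- Extensions of `TeamLTL` by atoms and connectives:
Boolean disjunction `⩔`, Boolean negation `∼`, inclusion atoms `⊆`,
the universal subteam quantifier `A`, the singleton subteam quantifier `A¹`
and the non-emptiness atom `∼⊥`. -/
inductive TExt : Type where
  | bdis | bneg | incl | asub | asub1 | nebot
deriving DecidableEq

/-- Formulae of TeamLTL together with all the extensions considered in the paper
(fragments are carved out via `TeamForm.exts`). -/
inductive TeamForm (α : Type u) : Type u where
  | pos : α → TeamForm α
  | neg : α → TeamForm α
  | lor : TeamForm α → TeamForm α → TeamForm α
  | land : TeamForm α → TeamForm α → TeamForm α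
  | next : TeamForm α → TeamForm α
  | luntil : TeamForm α → TeamForm α → TeamForm α
  | wuntil : TeamForm α → TeamForm α → TeamForm α
  | bdis : TeamForm α → TeamForm α → TeamForm α
  | bneg : TeamForm α → TeamForm α
  | incl : List (LTLForm α × LTLForm α) → TeamForm α
  | asub : TeamForm α → TeamForm α
  | asub1 : TeamForm α → TeamForm α
  | nebot : TeamForm α

namespace TeamForm
variable {α : Type u}

/-- Synchronous team semantics for (extended) TeamLTL. -/
def sat : Set (Trace α) → ℕ → TeamForm α → Prop
  | T, i, pos p => ∀ t ∈ T, p ∈ t i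
  | T, i, neg p => ∀ t ∈ T, p ∉ t i
  | T, i, lor φ ψ => ∃ T₁ T₂, T₁ ∪ T₂ = T ∧ sat T₁ i φ ∧ sat T₂ i ψ
  | T, i, land φ ψ => sat T i φ ∧ sat T i ψ
  | T, i, next φ => sat T (i+1) φ
  | T, i, luntil φ ψ => ∃ k, i ≤ k ∧ sat T k ψ ∧ ∀ m, i ≤ m → m < k → sat T m φ
  | T, i, wuntil φ ψ => ∀ k, i ≤ k → sat T k φ ∨ ∃ m, i ≤ m ∧ m ≤ k ∧ sat T m ψ
  | T, i, bdis φ ψ => sat T i φ ∨ sat T i ψ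
  | T, i, bneg φ => ¬ sat T i φ
  | T, i, incl ps => ∀ t ∈ T, ∃ t' ∈ T, ∀ p ∈ ps, (LTLForm.sat t i p.1 ↔ LTLForm.sat t' i p.2)
  | T, i, asub φ => ∀ S, S ⊆ T → sat S i φ
  | T, i, asub1 φ => ∀ t ∈ T, sat {t} i φ
  | T, _, nebot => T.Nonempty

/-- The collection of extensions (atoms/connectives beyond core TeamLTL)
occurring in a formula. -/
def exts : TeamForm α → Set TExt
  | pos _ => ∅
  | neg _ => ∅
  | lor φ ψ => exts φ ∪ exts ψ
  | land φ ψ => exts φ ∪ exts ψ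
  | next φ => exts φ
  | luntil φ ψ => exts φ ∪ exts ψ
  | wuntil φ ψ => exts φ ∪ exts ψ
  | bdis φ ψ => insert TExt.bdis (exts φ ∪ exts ψ)
  | bneg φ => insert TExt.bneg (exts φ)
  | incl _ => {TExt.incl}
  | asub φ => insert TExt.asub (exts φ)
  | asub1 φ => insert TExt.asub1 (exts φ)
  | nebot => {TExt.nebot}

/-- Size of an (extended) TeamLTL formula. -/
def size : TeamForm α → ℕ
  | pos _ => 1
  | neg _ => 1
  | lor φ ψ => φ.size + ψ.size + 1
  | land φ ψ => φ.size + ψ.size + 1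
  | next φ => φ.size + 1
  | luntil φ ψ => φ.size + ψ.size + 1
  | wuntil φ ψ => φ.size + ψ.size + 1
  | bdis φ ψ => φ.size + ψ.size + 1
  | bneg φ => φ.size + 1
  | incl ps => (ps.map (fun p => p.1.size + p.2.size)).sum + 1
  | asub φ => φ.size + 1
  | asub1 φ => φ.size + 1
  | nebot => 1

end TeamForm

universe v

/-- Quantifier-free formulae of HyperLTL / HyperQPTL(⁺) over atomic
propositions `α` and trace variables `V`, in negation normal form. -/
inductive QF (α : Type u) (V : Type v) : Type (max u v) where
  | pos : α → V → QF α V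
  | neg : α → V → QF α V
  | lor : QF α V → QF α V → QF α V
  | land : QF α V → QF α V → QF α V
  | next : QF α V → QF α V
  | luntil : QF α V → QF α V → QF α V
  | wuntil : QF α V → QF α V → QF α V

namespace QF
variable {α : Type u} {V : Type v}

/-- Semantics of quantifier-free hyperlogic formulae with respect to a trace
assignment `asgn` and a time point `i` (time advances uniformly on all
traces). -/
def sat (asgn : V → Trace α) : ℕ → QF α V → Prop
  | i, pos p π => p ∈ asgn π i
  | i, neg p π => p ∉ asgn π i
  | i, lor φ ψ => sat asgn i φ ∨ sat asgn i ψ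
  | i, land φ ψ => sat asgn i φ ∧ sat asgn i ψ
  | i, next φ => sat asgn (i+1) φ
  | i, luntil φ ψ => ∃ k, i ≤ k ∧ sat asgn k ψ ∧ ∀ m, i ≤ m → m < k → sat asgn m φ
  | i, wuntil φ ψ => ∀ k, i ≤ k → sat asgn k φ ∨ ∃ m, i ≤ m ∧ m ≤ k ∧ sat asgn m ψ

/-- Size of a quantifier-free formula. -/
def size : QF α V → ℕ
  | pos _ _ => 1
  | neg _ _ => 1
  | lor φ ψ => φ.size + ψ.size + 1
  | land φ ψ => φ.size + ψ.size + 1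
  | next φ => φ.size + 1
  | luntil φ ψ => φ.size + ψ.size + 1
  | wuntil φ ψ => φ.size + ψ.size + 1

/-- Negation of a quantifier-free formula, in negation normal form. -/
def dual : QF α V → QF α V
  | pos p π => neg p π
  | neg p π => pos p π
  | lor φ ψ => land (dual φ) (dual ψ)
  | land φ ψ => lor (dual φ) (dual ψ)
  | next φ => next (dual φ)
  | luntil φ ψ => wuntil (dual ψ) (land (dual φ) (dual ψ))
  | wuntil φ ψ => luntil (dual ψ) (land (dual φ) (dual ψ))

end QF

/-- Formulae of HyperQPTL⁺: a quantifier prefix consisting of trace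
quantifiers (`exTr`/`allTr`), uniform propositional quantifiers
(`exU`/`allU`) and non-uniform propositional quantifiers (`exN`/`allN`),
followed by a quantifier-free formula.  HyperQPTL is the fragment without
`exN`/`allN`; HyperLTL is the fragment with only trace quantifiers. -/
inductive HQ (α : Type u) (V : Type v) : Type (max u v) where
  | qf : QF α V → HQ α V
  | exTr : V → HQ α V → HQ α V
  | allTr : V → HQ α V → HQ α V
  | exU : α → HQ α V → HQ α V
  | allU : α → HQ α V → HQ α V
  | exN : α → HQ α V → HQ α V
  | allN : α → HQ α V → HQ α V

namespace HQ
variable {α : Type u} {V : Type v}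

/-- Reinterpretation of the proposition `q` along a trace according to the
`q`-sequence `s`. -/
def reint (q : α) (s : ℕ → Prop) (t : Trace α) : Trace α :=
  fun j => {a | (a = q ∧ s j) ∨ (a ≠ q ∧ a ∈ t j)}

/-- Projection of a trace to the propositions other than `q`. -/
def proj (q : α) (t : Trace α) : Trace α :=
  fun j => {a | a ≠ q ∧ a ∈ t j}

/-- Semantics of HyperQPTL⁺ over a set `T` of traces, a trace assignment
`asgn` and a time point `i`. -/
def sat [DecidableEq V] (T : Set (Trace α)) (asgn : V → Trace α) (i : ℕ) :
    HQ α V → Prop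
  | qf ψ => QF.sat asgn i ψ
  | exTr π φ => ∃ t ∈ T, sat T (Function.update asgn π t) i φ
  | allTr π φ => ∀ t ∈ T, sat T (Function.update asgn π t) i φ
  | exU q φ => ∃ s : ℕ → Prop,
      sat ((reint q s) '' T) (fun π => reint q s (asgn π)) i φ
  | allU q φ => ∀ s : ℕ → Prop,
      sat ((reint q s) '' T) (fun π => reint q s (asgn π)) i φ
  | exN q φ => ∃ (T' : Set (Trace α)) (asgn' : V → Trace α),
      (proj q '' T = proj q '' T') ∧ (∀ π, proj q (asgn π) = proj q (asgn' π)) ∧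
      (∀ π, asgn' π ∈ T') ∧ sat T' asgn' i φ
  | allN q φ => ∀ (T' : Set (Trace α)) (asgn' : V → Trace α),
      (proj q '' T = proj q '' T') → (∀ π, proj q (asgn π) = proj q (asgn' π)) →
      (∀ π, asgn' π ∈ T') → sat T' asgn' i φ

/-- A sentence is satisfied by a set of traces at time `i` if it holds under
every (equivalently, under some) trace assignment. -/
def sentSat [DecidableEq V] (T : Set (Trace α)) (i : ℕ) (φ : HQ α V) : Prop :=
  ∀ asgn : V → Trace α, sat T asgn i φ

/-- Size of a HyperQPTL⁺ formula. -/
def size : HQ α V → ℕ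
  | qf ψ => ψ.size + 1
  | exTr _ φ => φ.size + 1
  | allTr _ φ => φ.size + 1
  | exU _ φ => φ.size + 1
  | allU _ φ => φ.size + 1
  | exN _ φ => φ.size + 1
  | allN _ φ => φ.size + 1

end HQ

/-- Lifting a trace over `α` to a trace over `α ⊕ ℕ` (the original
propositions, together with countably many fresh propositions that never
hold). -/
def liftTrace {α : Type u} (t : Trace α) : Trace (α ⊕ ℕ) :=
  fun j => Sum.inl '' t j

/-- Lifting a team over `α` to a team over `α ⊕ ℕ`. -/
def liftTeam {α : Type u} (T : Set (Trace α)) : Set (Trace (α ⊕ ℕ)) :=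
  liftTrace '' T

namespace FlatBlock
variable {α : Type u}

/-- A TeamLTL formula is flat if its satisfaction by a team is equivalent to
its satisfaction by all singleton subteams. -/
def Flat (φ : TeamForm α) : Prop :=
  ∀ (T : Set (Trace α)) (i : ℕ),
    TeamForm.sat T i φ ↔ ∀ t ∈ T, TeamForm.sat {t} i φ

/-- A formula belongs to the left-flat fragment if in each of its subformulae
of the form `ψ U φ` or `ψ W φ` the left-hand formula `ψ` is flat. -/
def LeftFlat : TeamForm α → Prop
  | .pos _ => True
  | .neg _ => True
  | .lor φ ψ => LeftFlat φ ∧ LeftFlat ψ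
  | .land φ ψ => LeftFlat φ ∧ LeftFlat ψ
  | .next φ => LeftFlat φ
  | .luntil φ ψ => Flat φ ∧ LeftFlat φ ∧ LeftFlat ψ
  | .wuntil φ ψ => Flat φ ∧ LeftFlat φ ∧ LeftFlat ψ
  | .bdis φ ψ => LeftFlat φ ∧ LeftFlat ψ
  | .bneg φ => LeftFlat φ
  | .incl _ => True
  | .asub φ => LeftFlat φ
  | .asub1 φ => LeftFlat φ
  | .nebot => True

end FlatBlock

namespace Stmt11
open FlatBlock
variable {α : Type u} {V : Type v}

/-- The `∃_p* ∀_π` fragment of HyperQPTL: a block of existential uniform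
propositional quantifiers followed by a single universal trace quantifier
and a quantifier-free matrix. -/
inductive EUAllPi : HQ α V → Prop
  | base (π : V) (ψ : QF α V) : EUAllPi (HQ.allTr π (HQ.qf ψ))
  | step (q : α) (φ : HQ α V) : EUAllPi φ → EUAllPi (HQ.exU q φ)

section Aux

/-- The fragment `TeamLTL(⩔,A¹)`. -/
def Frag (φ : TeamForm α) : Prop := φ.exts ⊆ {TExt.bdis, TExt.asub1}

lemma frag_lor {φ ψ : TeamForm α} (h : Frag (.lor φ ψ)) : Frag φ ∧ Frag ψ := by
  simp only [Frag, TeamForm.exts, Set.union_subset_iff] at h ⊢; exact h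

lemma frag_land {φ ψ : TeamForm α} (h : Frag (.land φ ψ)) : Frag φ ∧ Frag ψ := by
  simp only [Frag, TeamForm.exts, Set.union_subset_iff] at h ⊢; exact h

lemma frag_until {φ ψ : TeamForm α} (h : Frag (.luntil φ ψ)) : Frag φ ∧ Frag ψ := by
  simp only [Frag, TeamForm.exts, Set.union_subset_iff] at h ⊢; exact h

lemma frag_wuntil {φ ψ : TeamForm α} (h : Frag (.wuntil φ ψ)) : Frag φ ∧ Frag ψ := by
  simp only [Frag, TeamForm.exts, Set.union_subset_iff] at h ⊢; exact h

lemma frag_next {φ : TeamForm α} (h : Frag (.next φ)) : Frag φ := h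

lemma frag_bdis {φ ψ : TeamForm α} (h : Frag (.bdis φ ψ)) : Frag φ ∧ Frag ψ := by
  simp only [Frag, TeamForm.exts, Set.insert_subset_iff, Set.union_subset_iff] at h ⊢
  exact h.2

lemma frag_asub1 {φ : TeamForm α} (h : Frag (.asub1 φ)) : Frag φ := by
  simp only [Frag, TeamForm.exts, Set.insert_subset_iff] at h
  exact h.2

lemma frag_bneg {φ : TeamForm α} (h : Frag (.bneg φ)) : False := by
  have := h (show TExt.bneg ∈ (TeamForm.bneg φ).exts by
    simp [TeamForm.exts])
  simp at this

lemma frag_incl {ps : List (LTLForm α × LTLForm α)} (h : Frag (.incl ps)) : False := by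
  have := h (show TExt.incl ∈ (TeamForm.incl ps).exts by
    simp [TeamForm.exts])
  simp at this

lemma frag_asub {φ : TeamForm α} (h : Frag (.asub φ)) : False := by
  have := h (show TExt.asub ∈ (TeamForm.asub φ).exts by
    simp [TeamForm.exts])
  simp at this

lemma frag_nebot (h : Frag (.nebot : TeamForm α)) : False := by
  have := h (show TExt.nebot ∈ (TeamForm.nebot : TeamForm α).exts by
    simp [TeamForm.exts])
  simp at this

/-- A trace over `α ⊕ ℕ` made of a trace over `α` together with an
interpretation `g` of the fresh propositions. -/
def mkT (t : Trace α) (g : ℕ → ℕ → Prop) : Trace (α ⊕ ℕ) :=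
  fun j => {x | Sum.elim (fun a => a ∈ t j) (fun m => g m j) x}

@[simp] lemma mem_mkT_inl {t : Trace α} {g : ℕ → ℕ → Prop} {j : ℕ} (a : α) :
    Sum.inl a ∈ mkT t g j ↔ a ∈ t j := Iff.rfl

@[simp] lemma mem_mkT_inr {t : Trace α} {g : ℕ → ℕ → Prop} {j : ℕ} (m : ℕ) :
    Sum.inr m ∈ mkT t g j ↔ g m j := Iff.rfl

/-- Translation for flat formulae: per-trace (classical LTL) reading. -/
def tr1 : TeamForm α → QF (α ⊕ ℕ) ℕ
  | .pos p => .pos (Sum.inl p) 0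
  | .neg p => .neg (Sum.inl p) 0
  | .lor φ ψ => .lor (tr1 φ) (tr1 ψ)
  | .land φ ψ => .land (tr1 φ) (tr1 ψ)
  | .next φ => .next (tr1 φ)
  | .luntil φ ψ => .luntil (tr1 φ) (tr1 ψ)
  | .wuntil φ ψ => .wuntil (tr1 φ) (tr1 ψ)
  | .bdis φ ψ => .lor (tr1 φ) (tr1 ψ)
  | .asub1 φ => tr1 φ
  | _ => .pos (Sum.inr 0) 0

/-- Number of fresh propositions used by the main translation. -/
def cnt : TeamForm α → ℕ
  | .lor φ ψ => cnt φ + cnt ψ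
  | .land φ ψ => cnt φ + cnt ψ
  | .next φ => cnt φ
  | .luntil _ ψ => cnt ψ + 1
  | .wuntil _ ψ => cnt ψ + 1
  | .bdis φ ψ => cnt φ + cnt ψ + 1
  | _ => 0

/-- Main translation; `n` is the index of the first fresh proposition available. -/
def trQF : TeamForm α → ℕ → QF (α ⊕ ℕ) ℕ
  | .pos p, _ => .pos (Sum.inl p) 0
  | .neg p, _ => .neg (Sum.inl p) 0
  | .lor φ ψ, n => .lor (trQF φ n) (trQF ψ (n + cnt φ))
  | .land φ ψ, n => .land (trQF φ n) (trQF ψ (n + cnt φ))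
  | .next φ, n => .next (trQF φ n)
  | .luntil φ ψ, n =>
      .luntil (.land (tr1 φ) (.neg (Sum.inr n) 0))
              (.land (.pos (Sum.inr n) 0) (trQF ψ (n+1)))
  | .wuntil φ ψ, n =>
      .wuntil (.land (tr1 φ) (.neg (Sum.inr n) 0))
              (.land (.pos (Sum.inr n) 0) (trQF ψ (n+1)))
  | .bdis φ ψ, n =>
      .lor (.land (.pos (Sum.inr n) 0) (trQF φ (n+1)))
           (.land (.neg (Sum.inr n) 0) (trQF ψ (n+1+cnt φ)))
  | .asub1 φ, _ => tr1 φ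
  | _, _ => .pos (Sum.inr 0) 0

lemma empty_sat (φ : TeamForm α) : ∀ (i : ℕ), Frag φ → TeamForm.sat (∅ : Set (Trace α)) i φ := by
  induction φ with
  | pos p => intro i _; simp [TeamForm.sat]
  | neg p => intro i _; simp [TeamForm.sat]
  | lor φ ψ ihφ ihψ =>
    intro i hf
    obtain ⟨h1, h2⟩ := frag_lor hf
    exact ⟨∅, ∅, by simp, ihφ i h1, ihψ i h2⟩
  | land φ ψ ihφ ihψ =>
    intro i hf
    obtain ⟨h1, h2⟩ := frag_land hf
    exact ⟨ihφ i h1, ihψ i h2⟩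
  | next φ ih => intro i hf; exact ih (i+1) (frag_next hf)
  | luntil φ ψ ihφ ihψ =>
    intro i hf
    exact ⟨i, le_rfl, ihψ i (frag_until hf).2, fun m h1 h2 => absurd h2 (by omega)⟩
  | wuntil φ ψ ihφ ihψ =>
    intro i hf
    intro k hk
    exact Or.inl (ihφ k (frag_wuntil hf).1)
  | bdis φ ψ ihφ ihψ =>
    intro i hf
    exact Or.inl (ihφ i (frag_bdis hf).1)
  | bneg φ ih => intro i hf; exact (frag_bneg hf).elim
  | incl ps => intro i hf; simp [TeamForm.sat]
  | asub φ ih => intro i hf; exact (frag_asub hf).elim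
  | asub1 φ ih => intro i hf; simp [TeamForm.sat]
  | nebot => intro i hf; exact (frag_nebot hf).elim

lemma sat_singleton_lor {φ ψ : TeamForm α} (hφ : Frag φ) (hψ : Frag ψ) (t : Trace α) (i : ℕ) :
    TeamForm.sat {t} i (.lor φ ψ) ↔ TeamForm.sat {t} i φ ∨ TeamForm.sat {t} i ψ := by
  simp only [TeamForm.sat]
  constructor
  · rintro ⟨T₁, T₂, hu, h1, h2⟩
    have ht : t ∈ T₁ ∪ T₂ := by rw [hu]; exact Set.mem_singleton t
    rcases ht with ht | ht
    · left
      have hs : T₁ ⊆ {t} := by rw [← hu]; exact Set.subset_union_left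
      have : T₁ = {t} := Set.Subset.antisymm hs (Set.singleton_subset_iff.mpr ht)
      rwa [this] at h1
    · right
      have hs : T₂ ⊆ {t} := by rw [← hu]; exact Set.subset_union_right
      have : T₂ = {t} := Set.Subset.antisymm hs (Set.singleton_subset_iff.mpr ht)
      rwa [this] at h2
  · rintro (h | h)
    · exact ⟨{t}, ∅, by simp, h, empty_sat ψ i hψ⟩
    · exact ⟨∅, {t}, by simp, empty_sat φ i hφ, h⟩

lemma tr1_correct (φ : TeamForm α) :
    ∀ (t : Trace α) (g : ℕ → ℕ → Prop) (i : ℕ), Frag φ →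
      (TeamForm.sat {t} i φ ↔ QF.sat (fun _ => mkT t g) i (tr1 φ)) := by
  induction φ with
  | pos p => intro t g i _; simp [TeamForm.sat, tr1, QF.sat]
  | neg p => intro t g i _; simp [TeamForm.sat, tr1, QF.sat]
  | lor φ ψ ihφ ihψ =>
    intro t g i hf
    obtain ⟨h1, h2⟩ := frag_lor hf
    rw [sat_singleton_lor h1 h2]
    simp only [tr1, QF.sat]
    exact or_congr (ihφ t g i h1) (ihψ t g i h2)
  | land φ ψ ihφ ihψ =>
    intro t g i hf
    obtain ⟨h1, h2⟩ := frag_land hf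
    simp only [TeamForm.sat, tr1, QF.sat]
    exact and_congr (ihφ t g i h1) (ihψ t g i h2)
  | next φ ih =>
    intro t g i hf
    simp only [TeamForm.sat, tr1, QF.sat]
    exact ih t g (i+1) (frag_next hf)
  | luntil φ ψ ihφ ihψ =>
    intro t g i hf
    obtain ⟨h1, h2⟩ := frag_until hf
    simp only [TeamForm.sat, tr1, QF.sat]
    exact exists_congr fun k => and_congr_right fun _ =>
      and_congr (ihψ t g k h2) (forall_congr' fun m => imp_congr_right fun _ =>
        imp_congr_right fun _ => ihφ t g m h1)
  | wuntil φ ψ ihφ ihψ =>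
    intro t g i hf
    obtain ⟨h1, h2⟩ := frag_wuntil hf
    simp only [TeamForm.sat, tr1, QF.sat]
    exact forall_congr' fun k => imp_congr_right fun _ =>
      or_congr (ihφ t g k h1) (exists_congr fun m => and_congr_right fun _ =>
        and_congr_right fun _ => ihψ t g m h2)
  | bdis φ ψ ihφ ihψ =>
    intro t g i hf
    obtain ⟨h1, h2⟩ := frag_bdis hf
    simp only [TeamForm.sat, tr1, QF.sat]
    exact or_congr (ihφ t g i h1) (ihψ t g i h2)
  | bneg φ ih => intro t g i hf; exact (frag_bneg hf).elim
  | incl ps => intro t g i hf; exact (frag_incl hf).elim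
  | asub φ ih => intro t g i hf; exact (frag_asub hf).elim
  | asub1 φ ih =>
    intro t g i hf
    simp only [TeamForm.sat, tr1, Set.mem_singleton_iff, forall_eq]
    exact ih t g i (frag_asub1 hf)
  | nebot => intro t g i hf; exact (frag_nebot hf).elim

/-- Quantifier-free formula mentioning only trace variable `0`. -/
def OnlyZero : QF (α ⊕ ℕ) ℕ → Prop
  | .pos _ v => v = 0
  | .neg _ v => v = 0
  | .lor a b => OnlyZero a ∧ OnlyZero b
  | .land a b => OnlyZero a ∧ OnlyZero b
  | .next a => OnlyZero a
  | .luntil a b => OnlyZero a ∧ OnlyZero b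
  | .wuntil a b => OnlyZero a ∧ OnlyZero b

lemma qf_sat_congr (m : QF (α ⊕ ℕ) ℕ) :
    ∀ (a1 a2 : ℕ → Trace (α ⊕ ℕ)), OnlyZero m → a1 0 = a2 0 →
      ∀ i, (QF.sat a1 i m ↔ QF.sat a2 i m) := by
  induction m with
  | pos p v =>
    intro a1 a2 hz h i
    obtain rfl : v = 0 := hz
    simp only [QF.sat, h]
  | neg p v =>
    intro a1 a2 hz h i
    obtain rfl : v = 0 := hz
    simp only [QF.sat, h]
  | lor a b iha ihb =>
    intro a1 a2 hz h i
    obtain ⟨h1, h2⟩ := hz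
    simp only [QF.sat]
    exact or_congr (iha a1 a2 h1 h i) (ihb a1 a2 h2 h i)
  | land a b iha ihb =>
    intro a1 a2 hz h i
    obtain ⟨h1, h2⟩ := hz
    simp only [QF.sat]
    exact and_congr (iha a1 a2 h1 h i) (ihb a1 a2 h2 h i)
  | next a ih =>
    intro a1 a2 hz h i
    simp only [QF.sat]
    exact ih a1 a2 hz h (i+1)
  | luntil a b iha ihb =>
    intro a1 a2 hz h i
    obtain ⟨h1, h2⟩ := hz
    simp only [QF.sat]
    exact exists_congr fun k => and_congr_right fun _ =>
      and_congr (ihb a1 a2 h2 h k) (forall_congr' fun m => imp_congr_right fun _ =>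
        imp_congr_right fun _ => iha a1 a2 h1 h m)
  | wuntil a b iha ihb =>
    intro a1 a2 hz h i
    obtain ⟨h1, h2⟩ := hz
    simp only [QF.sat]
    exact forall_congr' fun k => imp_congr_right fun _ =>
      or_congr (iha a1 a2 h1 h k) (exists_congr fun m => and_congr_right fun _ =>
        and_congr_right fun _ => ihb a1 a2 h2 h m)

lemma onlyZero_tr1 (φ : TeamForm α) : OnlyZero (tr1 φ) := by
  induction φ with
  | pos p => exact rfl
  | neg p => exact rfl
  | lor φ ψ ihφ ihψ => exact ⟨ihφ, ihψ⟩
  | land φ ψ ihφ ihψ => exact ⟨ihφ, ihψ⟩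
  | next φ ih => exact ih
  | luntil φ ψ ihφ ihψ => exact ⟨ihφ, ihψ⟩
  | wuntil φ ψ ihφ ihψ => exact ⟨ihφ, ihψ⟩
  | bdis φ ψ ihφ ihψ => exact ⟨ihφ, ihψ⟩
  | bneg φ ih => exact rfl
  | incl ps => exact rfl
  | asub φ ih => exact rfl
  | asub1 φ ih => exact ih
  | nebot => exact rfl

lemma onlyZero_trQF (φ : TeamForm α) : ∀ n, OnlyZero (trQF φ n) := by
  induction φ with
  | pos p => intro n; exact rfl
  | neg p => intro n; exact rfl
  | lor φ ψ ihφ ihψ => intro n; exact ⟨ihφ n, ihψ (n + cnt φ)⟩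
  | land φ ψ ihφ ihψ => intro n; exact ⟨ihφ n, ihψ (n + cnt φ)⟩
  | next φ ih => intro n; exact ih n
  | luntil φ ψ ihφ ihψ => intro n; exact ⟨⟨onlyZero_tr1 φ, rfl⟩, rfl, ihψ (n+1)⟩
  | wuntil φ ψ ihφ ihψ => intro n; exact ⟨⟨onlyZero_tr1 φ, rfl⟩, rfl, ihψ (n+1)⟩
  | bdis φ ψ ihφ ihψ => intro n; exact ⟨⟨rfl, ihφ (n+1)⟩, rfl, ihψ (n+1+cnt φ)⟩
  | bneg φ ih => intro n; exact rfl
  | incl ps => intro n; exact rfl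
  | asub φ ih => intro n; exact rfl
  | asub1 φ ih => intro n; exact onlyZero_tr1 φ
  | nebot => intro n; exact rfl

lemma dep (φ : TeamForm α) :
    ∀ (n : ℕ) (g g' : ℕ → ℕ → Prop), Frag φ →
      (∀ m, n ≤ m → m < n + cnt φ → ∀ j, (g m j ↔ g' m j)) →
      ∀ (t : Trace α) (i : ℕ),
        (QF.sat (fun _ => mkT t g) i (trQF φ n) ↔ QF.sat (fun _ => mkT t g') i (trQF φ n)) := by
  induction φ with
  | pos p => intro n g g' _ _ t i; simp [trQF, QF.sat]
  | neg p => intro n g g' _ _ t i; simp [trQF, QF.sat]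
  | lor φ ψ ihφ ihψ =>
    intro n g g' hf hgg t i
    obtain ⟨h1, h2⟩ := frag_lor hf
    have hc : cnt (TeamForm.lor φ ψ) = cnt φ + cnt ψ := rfl
    simp only [trQF, QF.sat]
    exact or_congr
      (ihφ n g g' h1 (fun m hm1 hm2 j => hgg m hm1 (by omega) j) t i)
      (ihψ (n + cnt φ) g g' h2 (fun m hm1 hm2 j => hgg m (by omega) (by omega) j) t i)
  | land φ ψ ihφ ihψ =>
    intro n g g' hf hgg t i
    obtain ⟨h1, h2⟩ := frag_land hf
    have hc : cnt (TeamForm.land φ ψ) = cnt φ + cnt ψ := rfl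
    simp only [trQF, QF.sat]
    exact and_congr
      (ihφ n g g' h1 (fun m hm1 hm2 j => hgg m hm1 (by omega) j) t i)
      (ihψ (n + cnt φ) g g' h2 (fun m hm1 hm2 j => hgg m (by omega) (by omega) j) t i)
  | next φ ih =>
    intro n g g' hf hgg t i
    have hc : cnt (TeamForm.next φ) = cnt φ := rfl
    simp only [trQF, QF.sat]
    exact ih n g g' (frag_next hf) (fun m hm1 hm2 j => hgg m hm1 (by omega) j) t (i+1)
  | luntil φ ψ ihφ ihψ =>
    intro n g g' hf hgg t i
    obtain ⟨h1, h2⟩ := frag_until hf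
    have hc : cnt (TeamForm.luntil φ ψ) = cnt ψ + 1 := rfl
    have hq : ∀ j, (g n j ↔ g' n j) := fun j => hgg n le_rfl (by omega) j
    have hφiff : ∀ j, (QF.sat (fun _ => mkT t g) j (tr1 φ) ↔
        QF.sat (fun _ => mkT t g') j (tr1 φ)) :=
      fun j => (tr1_correct φ t g j h1).symm.trans (tr1_correct φ t g' j h1)
    have hψiff := fun j => ihψ (n+1) g g' h2
      (fun m hm1 hm2 jj => hgg m (by omega) (by omega) jj) t j
    simp only [trQF, QF.sat, mem_mkT_inr]
    exact exists_congr fun k => and_congr_right fun _ =>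
      and_congr (and_congr (hq k) (hψiff k))
        (forall_congr' fun m => imp_congr_right fun _ => imp_congr_right fun _ =>
          and_congr (hφiff m) (not_congr (hq m)))
  | wuntil φ ψ ihφ ihψ =>
    intro n g g' hf hgg t i
    obtain ⟨h1, h2⟩ := frag_wuntil hf
    have hc : cnt (TeamForm.wuntil φ ψ) = cnt ψ + 1 := rfl
    have hq : ∀ j, (g n j ↔ g' n j) := fun j => hgg n le_rfl (by omega) j
    have hφiff : ∀ j, (QF.sat (fun _ => mkT t g) j (tr1 φ) ↔
        QF.sat (fun _ => mkT t g') j (tr1 φ)) :=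
      fun j => (tr1_correct φ t g j h1).symm.trans (tr1_correct φ t g' j h1)
    have hψiff := fun j => ihψ (n+1) g g' h2
      (fun m hm1 hm2 jj => hgg m (by omega) (by omega) jj) t j
    simp only [trQF, QF.sat, mem_mkT_inr]
    exact forall_congr' fun k => imp_congr_right fun _ =>
      or_congr (and_congr (hφiff k) (not_congr (hq k)))
        (exists_congr fun m => and_congr_right fun _ => and_congr_right fun _ =>
          and_congr (hq m) (hψiff m))
  | bdis φ ψ ihφ ihψ =>
    intro n g g' hf hgg t i
    obtain ⟨h1, h2⟩ := frag_bdis hf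
    have hc : cnt (TeamForm.bdis φ ψ) = cnt φ + cnt ψ + 1 := rfl
    have hq : (g n i ↔ g' n i) := hgg n le_rfl (by omega) i
    have hφiff := ihφ (n+1) g g' h1
      (fun m hm1 hm2 j => hgg m (by omega) (by omega) j) t i
    have hψiff := ihψ (n+1+cnt φ) g g' h2
      (fun m hm1 hm2 j => hgg m (by omega) (by omega) j) t i
    simp only [trQF, QF.sat, mem_mkT_inr]
    exact or_congr (and_congr hq hφiff) (and_congr (not_congr hq) hψiff)
  | bneg φ ih => intro n g g' hf _ t i; exact (frag_bneg hf).elim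
  | incl ps => intro n g g' hf _ t i; exact (frag_incl hf).elim
  | asub φ ih => intro n g g' hf _ t i; exact (frag_asub hf).elim
  | asub1 φ ih =>
    intro n g g' hf _ t i
    simp only [trQF]
    exact (tr1_correct φ t g i (frag_asub1 hf)).symm.trans
      (tr1_correct φ t g' i (frag_asub1 hf))
  | nebot => intro n g g' hf _ t i; exact (frag_nebot hf).elim

lemma lemB (φ : TeamForm α) :
    ∀ (n : ℕ) (g : ℕ → ℕ → Prop) (T : Set (Trace α)) (i : ℕ), Frag φ → LeftFlat φ →
      (∀ t ∈ T, QF.sat (fun _ => mkT t g) i (trQF φ n)) → TeamForm.sat T i φ := by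
  induction φ with
  | pos p =>
    intro n g T i _ _ h
    simp only [TeamForm.sat]
    intro t ht
    simpa [trQF, QF.sat] using h t ht
  | neg p =>
    intro n g T i _ _ h
    simp only [TeamForm.sat]
    intro t ht
    simpa [trQF, QF.sat] using h t ht
  | lor φ ψ ihφ ihψ =>
    intro n g T i hf hl h
    obtain ⟨hf1, hf2⟩ := frag_lor hf
    obtain ⟨hl1, hl2⟩ := hl
    simp only [TeamForm.sat]
    refine ⟨{t | t ∈ T ∧ QF.sat (fun _ => mkT t g) i (trQF φ n)},
            {t | t ∈ T ∧ QF.sat (fun _ => mkT t g) i (trQF ψ (n + cnt φ))}, ?_, ?_, ?_⟩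
    · apply Set.Subset.antisymm
      · rintro t (⟨ht, _⟩ | ⟨ht, _⟩) <;> exact ht
      · intro t ht
        have := h t ht
        simp only [trQF, QF.sat] at this
        rcases this with hh | hh
        · exact Or.inl ⟨ht, hh⟩
        · exact Or.inr ⟨ht, hh⟩
    · exact ihφ n g _ i hf1 hl1 (fun t ht => ht.2)
    · exact ihψ (n + cnt φ) g _ i hf2 hl2 (fun t ht => ht.2)
  | land φ ψ ihφ ihψ =>
    intro n g T i hf hl h
    obtain ⟨hf1, hf2⟩ := frag_land hf
    obtain ⟨hl1, hl2⟩ := hl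
    have h' : ∀ t ∈ T, QF.sat (fun _ => mkT t g) i (trQF φ n) ∧
        QF.sat (fun _ => mkT t g) i (trQF ψ (n + cnt φ)) := by
      intro t ht
      have := h t ht
      simpa only [trQF, QF.sat] using this
    exact ⟨ihφ n g T i hf1 hl1 (fun t ht => (h' t ht).1),
           ihψ (n + cnt φ) g T i hf2 hl2 (fun t ht => (h' t ht).2)⟩
  | next φ ih =>
    intro n g T i hf hl h
    exact ih n g T (i+1) (frag_next hf) hl
      (fun t ht => by simpa only [trQF, QF.sat] using h t ht)
  | luntil φ ψ ihφ ihψ =>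
    intro n g T i hf hl h
    obtain ⟨hf1, hf2⟩ := frag_until hf
    obtain ⟨hflat, hl1, hl2⟩ := hl
    simp only [TeamForm.sat]
    rcases T.eq_empty_or_nonempty with rfl | ⟨t₀, ht₀⟩
    · exact ⟨i, le_rfl, empty_sat ψ i hf2, fun m hm1 hm2 => absurd hm2 (by omega)⟩
    · have h' : ∀ t ∈ T, ∃ k, i ≤ k ∧
          (g n k ∧ QF.sat (fun _ => mkT t g) k (trQF ψ (n+1))) ∧
          ∀ m, i ≤ m → m < k → (QF.sat (fun _ => mkT t g) m (tr1 φ) ∧ ¬ g n m) := by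
        intro t ht
        have := h t ht
        simpa only [trQF, QF.sat, mem_mkT_inr] using this
      obtain ⟨k₀, hk₀, ⟨hq₀, hψ₀⟩, hpre₀⟩ := h' t₀ ht₀
      have key : ∀ t ∈ T, QF.sat (fun _ => mkT t g) k₀ (trQF ψ (n+1)) ∧
          ∀ m, i ≤ m → m < k₀ → QF.sat (fun _ => mkT t g) m (tr1 φ) := by
        intro t ht
        obtain ⟨k, hk, ⟨hq, hψ'⟩, hpre⟩ := h' t ht
        have hkk : k = k₀ := by
          rcases Nat.lt_trichotomy k k₀ with hlt | he | hgt
          · exact absurd hq (hpre₀ k hk hlt).2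
          · exact he
          · exact absurd hq₀ (hpre k₀ hk₀ hgt).2
        subst hkk
        exact ⟨hψ', fun m hm1 hm2 => (hpre m hm1 hm2).1⟩
      refine ⟨k₀, hk₀, ihψ (n+1) g T k₀ hf2 hl2 (fun t ht => (key t ht).1), ?_⟩
      intro m hm1 hm2
      exact (hflat T m).mpr
        (fun t ht => (tr1_correct φ t g m hf1).mpr ((key t ht).2 m hm1 hm2))
  | wuntil φ ψ ihφ ihψ =>
    intro n g T i hf hl h
    obtain ⟨hf1, hf2⟩ := frag_wuntil hf
    obtain ⟨hflat, hl1, hl2⟩ := hl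
    simp only [TeamForm.sat]
    have h' : ∀ t ∈ T, ∀ k, i ≤ k →
        (QF.sat (fun _ => mkT t g) k (tr1 φ) ∧ ¬ g n k) ∨
        ∃ m, i ≤ m ∧ m ≤ k ∧ (g n m ∧ QF.sat (fun _ => mkT t g) m (trQF ψ (n+1))) := by
      intro t ht
      have := h t ht
      simpa only [trQF, QF.sat, mem_mkT_inr] using this
    classical
    by_cases hex : ∃ m, i ≤ m ∧ g n m
    · have hm₀ := Nat.find_spec hex
      set m₀ := Nat.find hex with hm₀def
      have hmin : ∀ m, m < m₀ → ¬ (i ≤ m ∧ g n m) := fun m hm => Nat.find_min hex hm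
      have keyψ : ∀ t ∈ T, QF.sat (fun _ => mkT t g) m₀ (trQF ψ (n+1)) := by
        intro t ht
        rcases h' t ht m₀ hm₀.1 with ⟨_, hng⟩ | ⟨m, hmm1, hmm2, hmm3, hmm4⟩
        · exact absurd hm₀.2 hng
        · have : m = m₀ := by
            rcases Nat.lt_or_ge m m₀ with hh | hh
            · exact absurd ⟨hmm1, hmm3⟩ (hmin m hh)
            · omega
          subst this
          exact hmm4
      have keyφ : ∀ k, i ≤ k → k < m₀ → TeamForm.sat T k φ := by
        intro k hk1 hk2
        refine (hflat T k).mpr (fun t ht => ?_)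
        rcases h' t ht k hk1 with ⟨hs, _⟩ | ⟨m, hmm1, hmm2, hmm3, _⟩
        · exact (tr1_correct φ t g k hf1).mpr hs
        · exact absurd ⟨hmm1, hmm3⟩ (hmin m (by omega))
      intro k hk
      rcases Nat.lt_or_ge k m₀ with hh | hh
      · exact Or.inl (keyφ k hk hh)
      · exact Or.inr ⟨m₀, hm₀.1, hh, ihψ (n+1) g T m₀ hf2 hl2 keyψ⟩
    · intro k hk
      left
      refine (hflat T k).mpr (fun t ht => ?_)
      rcases h' t ht k hk with ⟨hs, _⟩ | ⟨m, hmm1, _, hmm3, _⟩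
      · exact (tr1_correct φ t g k hf1).mpr hs
      · exact (hex ⟨m, hmm1, hmm3⟩).elim
  | bdis φ ψ ihφ ihψ =>
    intro n g T i hf hl h
    obtain ⟨hf1, hf2⟩ := frag_bdis hf
    obtain ⟨hl1, hl2⟩ := hl
    have h' : ∀ t ∈ T, (g n i ∧ QF.sat (fun _ => mkT t g) i (trQF φ (n+1))) ∨
        (¬ g n i ∧ QF.sat (fun _ => mkT t g) i (trQF ψ (n+1+cnt φ))) := by
      intro t ht
      have := h t ht
      simpa only [trQF, QF.sat, mem_mkT_inr] using this
    simp only [TeamForm.sat]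
    by_cases hg : g n i
    · exact Or.inl (ihφ (n+1) g T i hf1 hl1
        (fun t ht => ((h' t ht).resolve_right (fun hh => hh.1 hg)).2))
    · exact Or.inr (ihψ (n+1+cnt φ) g T i hf2 hl2
        (fun t ht => ((h' t ht).resolve_left (fun hh => hg hh.1)).2))
  | bneg φ ih => intro n g T i hf _ _; exact (frag_bneg hf).elim
  | incl ps => intro n g T i hf _ _; exact (frag_incl hf).elim
  | asub φ ih => intro n g T i hf _ _; exact (frag_asub hf).elim
  | asub1 φ ih =>
    intro n g T i hf _ h
    simp only [TeamForm.sat]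
    intro t ht
    exact (tr1_correct φ t g i (frag_asub1 hf)).mpr (by simpa only [trQF] using h t ht)
  | nebot => intro n g T i hf _ _; exact (frag_nebot hf).elim

lemma lemA (φ : TeamForm α) :
    ∀ (n : ℕ) (T : Set (Trace α)) (i : ℕ), Frag φ → LeftFlat φ → TeamForm.sat T i φ →
      ∃ g : ℕ → ℕ → Prop, ∀ t ∈ T, QF.sat (fun _ => mkT t g) i (trQF φ n) := by
  induction φ with
  | pos p =>
    intro n T i _ _ h
    simp only [TeamForm.sat] at h
    exact ⟨fun _ _ => False, fun t ht => by simpa [trQF, QF.sat] using h t ht⟩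
  | neg p =>
    intro n T i _ _ h
    simp only [TeamForm.sat] at h
    exact ⟨fun _ _ => False, fun t ht => by simpa [trQF, QF.sat] using h t ht⟩
  | lor φ ψ ihφ ihψ =>
    intro n T i hf hl h
    obtain ⟨hf1, hf2⟩ := frag_lor hf
    obtain ⟨hl1, hl2⟩ := hl
    simp only [TeamForm.sat] at h
    obtain ⟨T₁, T₂, hu, hT1, hT2⟩ := h
    obtain ⟨g₁, hg₁⟩ := ihφ n T₁ i hf1 hl1 hT1
    obtain ⟨g₂, hg₂⟩ := ihψ (n + cnt φ) T₂ i hf2 hl2 hT2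
    refine ⟨fun m => if m < n + cnt φ then g₁ m else g₂ m, fun t ht => ?_⟩
    have ht' : t ∈ T₁ ∪ T₂ := by rw [hu]; exact ht
    simp only [trQF, QF.sat]
    rcases ht' with ht' | ht'
    · exact Or.inl ((dep φ n g₁ _ hf1
        (fun m hm1 hm2 j => by rw [if_pos (show m < n + cnt φ by omega)]) t i).mp (hg₁ t ht'))
    · exact Or.inr ((dep ψ (n + cnt φ) g₂ _ hf2
        (fun m hm1 hm2 j => by rw [if_neg (show ¬ m < n + cnt φ by omega)]) t i).mp (hg₂ t ht'))
  | land φ ψ ihφ ihψ =>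
    intro n T i hf hl h
    obtain ⟨hf1, hf2⟩ := frag_land hf
    obtain ⟨hl1, hl2⟩ := hl
    simp only [TeamForm.sat] at h
    obtain ⟨g₁, hg₁⟩ := ihφ n T i hf1 hl1 h.1
    obtain ⟨g₂, hg₂⟩ := ihψ (n + cnt φ) T i hf2 hl2 h.2
    refine ⟨fun m => if m < n + cnt φ then g₁ m else g₂ m, fun t ht => ?_⟩
    simp only [trQF, QF.sat]
    exact ⟨(dep φ n g₁ _ hf1
        (fun m hm1 hm2 j => by rw [if_pos (show m < n + cnt φ by omega)]) t i).mp (hg₁ t ht),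
      (dep ψ (n + cnt φ) g₂ _ hf2
        (fun m hm1 hm2 j => by rw [if_neg (show ¬ m < n + cnt φ by omega)]) t i).mp (hg₂ t ht)⟩
  | next φ ih =>
    intro n T i hf hl h
    simp only [TeamForm.sat] at h
    obtain ⟨g, hg⟩ := ih n T (i+1) (frag_next hf) hl h
    exact ⟨g, fun t ht => by simp only [trQF, QF.sat]; exact hg t ht⟩
  | luntil φ ψ ihφ ihψ =>
    intro n T i hf hl h
    obtain ⟨hf1, hf2⟩ := frag_until hf
    obtain ⟨hflat, hl1, hl2⟩ := hl
    simp only [TeamForm.sat] at h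
    obtain ⟨k, hk, hψk, hpre⟩ := h
    obtain ⟨g₁, hg₁⟩ := ihψ (n+1) T k hf2 hl2 hψk
    refine ⟨Function.update g₁ n (fun j => j = k), fun t ht => ?_⟩
    simp only [trQF, QF.sat, mem_mkT_inr]
    refine ⟨k, hk, ⟨?_, ?_⟩, ?_⟩
    · simp [Function.update]
    · exact (dep ψ (n+1) g₁ _ hf2
        (fun m hm1 hm2 j => by rw [Function.update_of_ne (show m ≠ n by omega)]) t k).mp
        (hg₁ t ht)
    · intro m hm1 hm2
      refine ⟨(tr1_correct φ t _ m hf1).mp ((hflat T m).mp (hpre m hm1 hm2) t ht), ?_⟩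
      simp only [Function.update_self]
      omega
  | wuntil φ ψ ihφ ihψ =>
    intro n T i hf hl h
    obtain ⟨hf1, hf2⟩ := frag_wuntil hf
    obtain ⟨hflat, hl1, hl2⟩ := hl
    simp only [TeamForm.sat] at h
    classical
    by_cases hG : ∀ k, i ≤ k → TeamForm.sat T k φ
    · refine ⟨fun _ _ => False, fun t ht => ?_⟩
      simp only [trQF, QF.sat, mem_mkT_inr]
      intro k hk
      exact Or.inl ⟨(tr1_correct φ t _ k hf1).mp ((hflat T k).mp (hG k hk) t ht),
        fun hc => hc⟩
    · push_neg at hG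
      obtain ⟨k₀, hk₀, hnk₀⟩ := hG
      have hex : ∃ m, i ≤ m ∧ TeamForm.sat T m ψ := by
        rcases h k₀ hk₀ with hc | ⟨m, hmm1, _, hmm3⟩
        · exact absurd hc hnk₀
        · exact ⟨m, hmm1, hmm3⟩
      have hm₀ := Nat.find_spec hex
      set m₀ := Nat.find hex with hm₀def
      have hmin : ∀ m, m < m₀ → ¬ (i ≤ m ∧ TeamForm.sat T m ψ) :=
        fun m hm => Nat.find_min hex hm
      have hpre : ∀ k, i ≤ k → k < m₀ → TeamForm.sat T k φ := by
        intro k h1 h2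
        rcases h k h1 with hc | ⟨m, hmm1, hmm2, hmm3⟩
        · exact hc
        · exact absurd ⟨hmm1, hmm3⟩ (hmin m (by omega))
      obtain ⟨g₁, hg₁⟩ := ihψ (n+1) T m₀ hf2 hl2 hm₀.2
      refine ⟨Function.update g₁ n (fun j => j = m₀), fun t ht => ?_⟩
      simp only [trQF, QF.sat, mem_mkT_inr]
      intro k hk
      rcases Nat.lt_or_ge k m₀ with hh | hh
      · refine Or.inl ⟨(tr1_correct φ t _ k hf1).mp ((hflat T k).mp (hpre k hk hh) t ht), ?_⟩
        simp only [Function.update_self]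
        omega
      · refine Or.inr ⟨m₀, hm₀.1, hh, ?_, ?_⟩
        · simp [Function.update]
        · exact (dep ψ (n+1) g₁ _ hf2
            (fun m hm1 hm2 j => by rw [Function.update_of_ne (show m ≠ n by omega)]) t m₀).mp
            (hg₁ t ht)
  | bdis φ ψ ihφ ihψ =>
    intro n T i hf hl h
    obtain ⟨hf1, hf2⟩ := frag_bdis hf
    obtain ⟨hl1, hl2⟩ := hl
    simp only [TeamForm.sat] at h
    rcases h with h | h
    · obtain ⟨g₁, hg₁⟩ := ihφ (n+1) T i hf1 hl1 h
      refine ⟨Function.update g₁ n (fun _ => True), fun t ht => ?_⟩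
      simp only [trQF, QF.sat, mem_mkT_inr]
      refine Or.inl ⟨by simp [Function.update], ?_⟩
      exact (dep φ (n+1) g₁ _ hf1
        (fun m hm1 hm2 j => by rw [Function.update_of_ne (show m ≠ n by omega)]) t i).mp
        (hg₁ t ht)
    · obtain ⟨g₁, hg₁⟩ := ihψ (n+1+cnt φ) T i hf2 hl2 h
      refine ⟨Function.update g₁ n (fun _ => False), fun t ht => ?_⟩
      simp only [trQF, QF.sat, mem_mkT_inr]
      refine Or.inr ⟨by simp [Function.update], ?_⟩
      exact (dep ψ (n+1+cnt φ) g₁ _ hf2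
        (fun m hm1 hm2 j => by rw [Function.update_of_ne (show m ≠ n by omega)]) t i).mp
        (hg₁ t ht)
  | bneg φ ih => intro n T i hf _ _; exact (frag_bneg hf).elim
  | incl ps => intro n T i hf _ _; exact (frag_incl hf).elim
  | asub φ ih => intro n T i hf _ _; exact (frag_asub hf).elim
  | asub1 φ ih =>
    intro n T i hf _ h
    simp only [TeamForm.sat] at h
    refine ⟨fun _ _ => False, fun t ht => ?_⟩
    simp only [trQF]
    exact (tr1_correct φ t _ i (frag_asub1 hf)).mp (h t ht)
  | nebot => intro n T i hf _ _; exact (frag_nebot hf).elim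

/-- The quantifier prefix: `cnt φ` existential uniform propositional
quantifiers followed by a universal trace quantifier. -/
def buildEU (m : QF (α ⊕ ℕ) ℕ) : ℕ → HQ (α ⊕ ℕ) ℕ
  | 0 => HQ.allTr 0 (HQ.qf m)
  | k+1 => HQ.exU (Sum.inr k) (buildEU m k)

lemma euallpi_buildEU (m : QF (α ⊕ ℕ) ℕ) : ∀ k, EUAllPi (buildEU m k)
  | 0 => EUAllPi.base 0 m
  | k+1 => EUAllPi.step _ _ (euallpi_buildEU m k)

lemma size_buildEU (m : QF (α ⊕ ℕ) ℕ) : ∀ k, (buildEU m k).size = m.size + 2 + k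
  | 0 => rfl
  | k+1 => by
    simp only [buildEU, HQ.size, size_buildEU m k]
    omega

lemma size_pos (φ : TeamForm α) : 1 ≤ φ.size := by
  cases φ <;> simp only [TeamForm.size] <;> omega

lemma cnt_le_size (φ : TeamForm α) : cnt φ ≤ φ.size := by
  induction φ <;> simp only [cnt, TeamForm.size] <;> omega

lemma tr1_size (φ : TeamForm α) : (tr1 φ).size ≤ φ.size := by
  induction φ <;> simp only [tr1, TeamForm.size, QF.size] <;> omega

lemma trQF_size (φ : TeamForm α) : ∀ n, (trQF φ n).size ≤ 5 * φ.size := by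
  induction φ with
  | pos p => intro n; simp [trQF, TeamForm.size, QF.size]
  | neg p => intro n; simp [trQF, TeamForm.size, QF.size]
  | lor φ ψ ihφ ihψ =>
    intro n
    have h1 := ihφ n
    have h2 := ihψ (n + cnt φ)
    simp only [trQF, TeamForm.size, QF.size]
    omega
  | land φ ψ ihφ ihψ =>
    intro n
    have h1 := ihφ n
    have h2 := ihψ (n + cnt φ)
    simp only [trQF, TeamForm.size, QF.size]
    omega
  | next φ ih =>
    intro n
    have h1 := ih n
    simp only [trQF, TeamForm.size, QF.size]
    omega
  | luntil φ ψ ihφ ihψ =>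
    intro n
    have h1 := tr1_size φ
    have h2 := ihψ (n+1)
    simp only [trQF, TeamForm.size, QF.size]
    omega
  | wuntil φ ψ ihφ ihψ =>
    intro n
    have h1 := tr1_size φ
    have h2 := ihψ (n+1)
    simp only [trQF, TeamForm.size, QF.size]
    omega
  | bdis φ ψ ihφ ihψ =>
    intro n
    have h1 := ihφ (n+1)
    have h2 := ihψ (n+1+cnt φ)
    simp only [trQF, TeamForm.size, QF.size]
    omega
  | bneg φ ih =>
    intro n
    simp only [trQF, TeamForm.size, QF.size]
    omega
  | incl ps =>
    intro n
    simp only [trQF, TeamForm.size, QF.size]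
    omega
  | asub φ ih =>
    intro n
    simp only [trQF, TeamForm.size, QF.size]
    omega
  | asub1 φ ih =>
    intro n
    have h1 := tr1_size φ
    simp only [trQF, TeamForm.size, QF.size]
    omega
  | nebot =>
    intro n
    simp only [trQF, TeamForm.size, QF.size]
    omega

lemma image_reint (k : ℕ) (s : ℕ → Prop) (g : ℕ → ℕ → Prop) (T : Set (Trace α)) :
    (HQ.reint (Sum.inr k) s) '' ((fun t => mkT t g) '' T)
      = (fun t => mkT t (Function.update g k s)) '' T := by
  rw [← Set.image_comp]
  apply Set.image_congr'
  intro t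
  show HQ.reint (Sum.inr k) s (mkT t g) = mkT t (Function.update g k s)
  funext j
  ext x
  cases x with
  | inl a => simp [HQ.reint, mkT, Function.update]
  | inr m =>
    by_cases hm : m = k
    · subst hm
      simp [HQ.reint, mkT, Function.update]
    · simp [HQ.reint, mkT, Function.update, hm]

lemma liftTeam_eq (T : Set (Trace α)) :
    liftTeam T = (fun t => mkT t (fun _ _ => False)) '' T := by
  apply Set.image_congr'
  intro t
  funext j
  ext x
  cases x with
  | inl a => simp [liftTrace, mkT]
  | inr m => simp [liftTrace, mkT]

lemma sem (m : QF (α ⊕ ℕ) ℕ) (hz : OnlyZero m) :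
    ∀ (k : ℕ) (g₀ : ℕ → ℕ → Prop) (T : Set (Trace α)) (asgn : ℕ → Trace (α ⊕ ℕ)) (i : ℕ),
      HQ.sat ((fun t => mkT t g₀) '' T) asgn i (buildEU m k) ↔
        ∃ g : ℕ → ℕ → Prop, (∀ m' j, k ≤ m' → (g m' j ↔ g₀ m' j)) ∧
          ∀ t ∈ T, QF.sat (fun _ => mkT t g) i m := by
  intro k
  induction k with
  | zero =>
    intro g₀ T asgn i
    simp only [buildEU, HQ.sat]
    constructor
    · intro h
      refine ⟨g₀, fun _ _ _ => Iff.rfl, fun t ht => ?_⟩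
      have := h (mkT t g₀) ⟨t, ht, rfl⟩
      exact (qf_sat_congr m _ _ hz (by simp) i).mpr this
    · rintro ⟨g, hg, h⟩ u hu
      obtain ⟨t, ht, rfl⟩ := hu
      have hmk : mkT t g = mkT t g₀ := by
        funext j
        ext x
        cases x with
        | inl a => exact Iff.rfl
        | inr mm => exact hg mm j (Nat.zero_le _)
      exact (qf_sat_congr m _ _ hz (by simp [hmk]) i).mp (h t ht)
  | succ k ih =>
    intro g₀ T asgn i
    simp only [buildEU, HQ.sat]
    constructor
    · rintro ⟨s, hs⟩
      rw [image_reint] at hs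
      obtain ⟨g, hg, h⟩ := (ih (Function.update g₀ k s) T _ i).mp hs
      refine ⟨g, ?_, h⟩
      intro m' j hm'
      rw [hg m' j (by omega), Function.update_of_ne (show m' ≠ k by omega)]
    · rintro ⟨g, hg, h⟩
      refine ⟨fun j => g k j, ?_⟩
      rw [image_reint]
      refine (ih (Function.update g₀ k (fun j => g k j)) T _ i).mpr ⟨g, ?_, h⟩
      intro m' j hm'
      rcases Nat.eq_or_lt_of_le hm' with he | hlt
      · subst he
        rw [Function.update_self]
      · rw [Function.update_of_ne (show m' ≠ k by omega)]
        exact hg m' j (by omega)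

end Aux

/-- For every formula `φ` in the left-flat fragment of
`TeamLTL(⩔,A¹)` there exists an equivalent HyperQPTL formula `Ψ` in the
`∃_p* ∀_π` fragment, of size linear in the size of `φ`: for every team
`(T,i)`, `(T,i) ⊨ φ` iff `Ψ` is satisfied by `T` at the evaluation point `i`.
(`Ψ` is over the atomic propositions of `φ` together with countably many
fresh propositions, and is evaluated on the correspondingly lifted team.) -/
theorem stmt_11 :
    ∃ c : ℕ, ∀ φ : TeamForm α, φ.exts ⊆ {TExt.bdis, TExt.asub1} → LeftFlat φ →
      ∃ Ψ : HQ (α ⊕ ℕ) ℕ, EUAllPi Ψ ∧ Ψ.size ≤ c * φ.size ∧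
        ∀ (T : Set (Trace α)) (i : ℕ),
          TeamForm.sat T i φ ↔ HQ.sentSat (liftTeam T) i Ψ := by
  refine ⟨8, fun φ hf hl => ?_⟩
  refine ⟨buildEU (trQF φ 0) (cnt φ), euallpi_buildEU _ _, ?_, ?_⟩
  · rw [size_buildEU]
    have h1 := trQF_size φ 0
    have h2 := cnt_le_size φ
    have h3 := size_pos φ
    omega
  · intro T i
    have hz := onlyZero_trQF φ 0
    constructor
    · intro h asgn
      rw [liftTeam_eq]
      obtain ⟨g, hg⟩ := lemA φ 0 T i hf hl h
      refine (sem _ hz (cnt φ) _ T asgn i).mpr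
        ⟨fun mm => if mm < cnt φ then g mm else fun _ => False, ?_, ?_⟩
      · intro m' j hm'
        simp [if_neg (show ¬ m' < cnt φ by omega)]
      · intro t ht
        refine (dep φ 0 g _ hf ?_ t i).mp (hg t ht)
        intro mm hm1 hm2 j
        rw [if_pos (show mm < cnt φ by omega)]
    · intro h
      have h' := h (fun _ _ => ∅)
      rw [liftTeam_eq] at h'
      obtain ⟨g, _, hg⟩ := (sem _ hz (cnt φ) _ T _ i).mp h'
      exact lemB φ 0 g T i hf hl hg

end Stmt11
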